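/- Let m > 0. There exists a constant C > 0 (depending only on m) such that for all q ≥ 0 one has δE(q) ≤ C · exp(−q²/2). In particular δE is bounded on [0,∞) and δE(q) → 0 as q → ∞. -/

import Mathlib

open MeasureTheory

/-- The one-particle energy `ω(p) = √(p² + m²)`. -/
noncomputable def ω (m p : ℝ) : ℝ := Real.sqrt (p ^ 2 + m ^ 2)

/-- `Ω(p,q,θ) = √(p² + q² + 2pq cos θ + m²)` in spherical coordinates. -/
noncomputable def Ω (m p q c : ℝ) : ℝ := Real.sqrt (p ^ 2 + q ^ 2 + 2 * p * q * c + m ^ 2)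

/-- Integrand of the noncommutative second-order energy correction in spherical
coordinates (`c = cos θ`). -/
noncomputable def F (m q p c : ℝ) : ℝ :=
  p ^ 2 * Real.exp (-(10 / 3) * p ^ 2) * Real.exp (-(8 / 3) * q * p * c) *
    Real.exp (-(ω m p) * Ω m p q c + ω m p * ω m q) / (ω m p * Ω m p q c) *
    (Real.exp (Ω m p q c * ω m q) / (ω m p + Ω m p q c - ω m q) +
      Real.exp (-(Ω m p q c) * ω m q) / (ω m p + Ω m p q c + ω m q))

/-- The noncommutative second-order energy correction `δE(q)`. -/
noncomputable def δE (m q : ℝ) : ℝ :=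
  Real.exp (-(10 / 3) * q ^ 2 - 2 * m) / (16 * (2 * Real.pi) ^ 5 * ω m q) *
    ∫ p in Set.Ioi (0 : ℝ), ∫ c in (-1 : ℝ)..1, F m q p c

/-!
On the integration domain the energy denominator is bounded below by the triangle inequality
for `ω`: `ω(p) + Ω - ω(q) ≥ ω(p) - p = m² / (ω(p) + p)`, which is where `m > 0` enters.
Bounding `ω(p) ≤ p + m`, `Ω ≤ p + q + m` in the exponents and completing squares then gives
`F ≤ C(m) e^{(11/4) q²} p² (2p + m) e^{-p²/30}` for `c ∈ [-1, 1]`, and the prefactor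
`e^{-(10/3) q²}` of `δE` leaves `e^{-(7/12) q²} ≤ e^{-q²/2}`. Since the integrand is
nonnegative, so is `δE`, which yields boundedness and decay.
-/

open Real Set MeasureTheory Filter Topology

section Estimates

variable {m p q c : ℝ}

lemma sq_ω (m p : ℝ) : ω m p ^ 2 = p ^ 2 + m ^ 2 := sq_sqrt (by positivity)

lemma abs_le_ω (m p : ℝ) : |p| ≤ ω m p := abs_le_sqrt (le_add_of_nonneg_right (sq_nonneg m))

lemma abs_mass_le_ω (m p : ℝ) : |m| ≤ ω m p := abs_le_sqrt (le_add_of_nonneg_left (sq_nonneg p))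

lemma ω_le_abs_add_abs (m p : ℝ) : ω m p ≤ |p| + |m| := by
  refine (sqrt_le_left (by positivity)).2 ?_
  nlinarith [sq_abs p, sq_abs m, mul_nonneg (abs_nonneg p) (abs_nonneg m)]

lemma mass_le_ω (m p : ℝ) : m ≤ ω m p := (le_abs_self m).trans (abs_mass_le_ω m p)

lemma ω_le_add (hm : 0 ≤ m) (hp : 0 ≤ p) : ω m p ≤ p + m := by
  simpa [abs_of_nonneg hp, abs_of_nonneg hm] using ω_le_abs_add_abs m p

lemma ω_nonneg (m p : ℝ) : 0 ≤ ω m p := sqrt_nonneg _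

-- The triangle inequality for `(q, m) = (p, 0) + (q - p, m)` in the Euclidean plane.
lemma ω_le_abs_add_ω_sub (m p q : ℝ) : ω m q ≤ |p| + ω m (p - q) := by
  have hps : p * (q - p) ≤ |p| * ω m (p - q) :=
    calc p * (q - p) ≤ |p| * |p - q| := by
          rw [abs_sub_comm, ← abs_mul]; exact le_abs_self _
      _ ≤ |p| * ω m (p - q) := mul_le_mul_of_nonneg_left (abs_le_ω m _) (abs_nonneg p)
  refine (sqrt_le_left (add_nonneg (abs_nonneg p) (ω_nonneg m _))).2 ?_
  nlinarith [sq_ω m (p - q), sq_abs p]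

lemma ω_sub_le_Ω (hpq : 0 ≤ p * q) (hc : -1 ≤ c) : ω m (p - q) ≤ Ω m p q c :=
  sqrt_le_sqrt (by nlinarith [mul_nonneg hpq (show 0 ≤ 1 + c by linarith)])

lemma Ω_le_ω_add (hpq : 0 ≤ p * q) (hc : c ≤ 1) : Ω m p q c ≤ ω m (p + q) :=
  sqrt_le_sqrt (by nlinarith [mul_nonneg hpq (show 0 ≤ 1 - c by linarith)])

lemma sq_le_energy_denominator_mul (hp : 0 ≤ p) (hq : 0 ≤ q) (hc : -1 ≤ c) :
    m ^ 2 ≤ (ω m p + Ω m p q c - ω m q) * (ω m p + p) := by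
  have htri := ω_le_abs_add_ω_sub m p q
  have hΩ := ω_sub_le_Ω (m := m) (mul_nonneg hp hq) hc
  have hsum : 0 ≤ ω m p + p := by linarith [abs_le_ω m p, neg_abs_le p]
  rw [abs_of_nonneg hp] at htri
  calc m ^ 2 = (ω m p - p) * (ω m p + p) := by linear_combination (sq_ω m p).symm
    _ ≤ _ := mul_le_mul_of_nonneg_right (by linarith) hsum

lemma energy_denominator_pos (hm : m ≠ 0) (hp : 0 ≤ p) (hq : 0 ≤ q) (hc : -1 ≤ c) :
    0 < ω m p + Ω m p q c - ω m q :=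
  pos_of_mul_pos_left ((by positivity : 0 < m ^ 2).trans_le
    (sq_le_energy_denominator_mul hp hq hc)) (by linarith [ω_nonneg m p])

lemma exp_div_add_exp_neg_div_le {x D D' : ℝ} (hx : 0 ≤ x) (hD : 0 < D) (hDD' : D ≤ D') :
    exp x / D + exp (-x) / D' ≤ 2 * exp x / D := by
  have : exp (-x) / D' ≤ exp x / D :=
    div_le_div₀ (exp_pos x).le (exp_le_exp.2 (by linarith)) hD hDD'
  linarith [show 2 * exp x / D = exp x / D + exp x / D by ring]

-- The difference of the two sides is `-((7p - 5q)² / 15 + (p - 30m)² / 30 + (q - 18m)² / 12)`.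
lemma quadratic_exponent_le (m p q : ℝ) :
    -(10 / 3) * p ^ 2 + 8 / 3 * p * q + (p + m) * (q + m) + (p + q + m) * (q + m) ≤
      11 / 4 * q ^ 2 + 59 * m ^ 2 + -(1 / 30) * p ^ 2 := by
  nlinarith [sq_nonneg (7 * p - 5 * q), sq_nonneg (p - 30 * m), sq_nonneg (q - 18 * m)]

noncomputable def radialMajorant (m p : ℝ) : ℝ := p ^ 2 * (2 * p + m) * exp (-(1 / 30) * p ^ 2)

lemma radialMajorant_nonneg (hm : 0 ≤ m) (hp : 0 ≤ p) : 0 ≤ radialMajorant m p := by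
  unfold radialMajorant; positivity

lemma integrableOn_radialMajorant (m : ℝ) : IntegrableOn (radialMajorant m) (Ioi 0) := by
  have h3 : IntegrableOn (fun p : ℝ => p ^ (3 : ℝ) * exp (-(1 / 30) * p ^ 2)) (Ioi 0) :=
    integrableOn_rpow_mul_exp_neg_mul_sq (by norm_num) (by norm_num)
  have h2 : IntegrableOn (fun p : ℝ => p ^ (2 : ℝ) * exp (-(1 / 30) * p ^ 2)) (Ioi 0) :=
    integrableOn_rpow_mul_exp_neg_mul_sq (by norm_num) (by norm_num)
  refine IntegrableOn.congr_fun ((h3.const_mul 2).add (h2.const_mul m)) (fun p _ => ?_)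
    measurableSet_Ioi
  simp only [Pi.add_apply, rpow_ofNat, radialMajorant]
  ring

lemma F_nonneg (hm : m ≠ 0) (hp : 0 ≤ p) (hq : 0 ≤ q) (hc : -1 ≤ c) : 0 ≤ F m q p c := by
  have hD := energy_denominator_pos hm hp hq hc
  have hD' : 0 < ω m p + Ω m p q c + ω m q := by linarith [ω_nonneg m q]
  refine mul_nonneg (div_nonneg (by positivity) (mul_nonneg (ω_nonneg m p) (sqrt_nonneg _))) ?_
  exact add_nonneg (div_nonneg (exp_pos _).le hD.le) (div_nonneg (exp_pos _).le hD'.le)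

lemma energy_bracket_le (hm : 0 < m) (hp : 0 ≤ p) (hq : 0 ≤ q) (hc : -1 ≤ c) :
    exp (Ω m p q c * ω m q) / (ω m p + Ω m p q c - ω m q) +
        exp (-Ω m p q c * ω m q) / (ω m p + Ω m p q c + ω m q) ≤
      2 * exp (Ω m p q c * ω m q) * ((ω m p + p) / m ^ 2) := by
  have hD := energy_denominator_pos hm.ne' hp hq hc
  have hD_inv : 1 / (ω m p + Ω m p q c - ω m q) ≤ (ω m p + p) / m ^ 2 := by
    rw [div_le_div_iff₀ hD (by positivity)]
    linarith [sq_le_energy_denominator_mul (m := m) hp hq hc]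
  have hΩ : 0 ≤ Ω m p q c := sqrt_nonneg _
  rw [neg_mul]
  refine (exp_div_add_exp_neg_div_le (mul_nonneg hΩ (ω_nonneg m q)) hD
    (by linarith [ω_nonneg m q])).trans ?_
  rw [← mul_one_div]
  exact mul_le_mul_of_nonneg_left hD_inv (by positivity)

lemma F_le (hm : 0 < m) (hp : 0 ≤ p) (hq : 0 ≤ q) (hc : c ∈ Icc (-1) 1) :
    F m q p c ≤ 2 * exp (11 / 4 * q ^ 2 + 59 * m ^ 2) / m ^ 4 * radialMajorant m p := by
  have hpq : 0 ≤ p * q := mul_nonneg hp hq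
  have hwp := mass_le_ω m p
  have hwp' := ω_le_add hm.le hp
  have hwq := mass_le_ω m q
  have hwq' := ω_le_add hm.le hq
  have hW : m ≤ Ω m p q c := (mass_le_ω m _).trans (ω_sub_le_Ω hpq hc.1)
  have hW' : Ω m p q c ≤ p + q + m := (Ω_le_ω_add hpq hc.2).trans (ω_le_add hm.le (by positivity))
  have hD := energy_denominator_pos hm.ne' hp hq hc.1
  have hbracket := energy_bracket_le hm hp hq hc.1
  rw [F]
  generalize ω m p = wp at *
  generalize ω m q = wq at *
  generalize Ω m p q c = W at *
  have hbracket_nonneg : 0 ≤ exp (W * wq) / (wp + W - wq) + exp (-W * wq) / (wp + W + wq) :=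
    add_nonneg (div_pos (exp_pos _) hD).le (div_pos (exp_pos _) (by linarith)).le
  have hexponent : -(10 / 3) * p ^ 2 + -(8 / 3) * q * p * c + (-wp * W + wp * wq) + W * wq ≤
      11 / 4 * q ^ 2 + 59 * m ^ 2 + -(1 / 30) * p ^ 2 := by
    have hwpwq : wp * wq ≤ (p + m) * (q + m) := mul_le_mul hwp' hwq' (by linarith) (by linarith)
    have hWwq : W * wq ≤ (p + q + m) * (q + m) := mul_le_mul hW' hwq' (by linarith) (by linarith)
    nlinarith [quadratic_exponent_le m p q, mul_nonneg hpq (show 0 ≤ 1 + c by linarith [hc.1]),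
      mul_nonneg (hm.le.trans hwp) (hm.le.trans hW)]
  calc _ = p ^ 2 * exp (-(10 / 3) * p ^ 2 + -(8 / 3) * q * p * c + (-wp * W + wp * wq)) /
        (wp * W) * (exp (W * wq) / (wp + W - wq) + exp (-W * wq) / (wp + W + wq)) := by
        simp only [exp_add]; ring
    _ ≤ p ^ 2 * exp (-(10 / 3) * p ^ 2 + -(8 / 3) * q * p * c + (-wp * W + wp * wq)) / m ^ 2 *
        (2 * exp (W * wq) * ((wp + p) / m ^ 2)) :=
        mul_le_mul (div_le_div_of_nonneg_left (by positivity) (by positivity) (by nlinarith))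
          hbracket hbracket_nonneg (by positivity)
    _ = 2 * (p ^ 2 * (wp + p)) / m ^ 4 *
        exp (-(10 / 3) * p ^ 2 + -(8 / 3) * q * p * c + (-wp * W + wp * wq) + W * wq) := by
        rw [exp_add _ (W * wq)]; ring
    _ ≤ 2 * (p ^ 2 * (2 * p + m)) / m ^ 4 *
          exp (11 / 4 * q ^ 2 + 59 * m ^ 2 + -(1 / 30) * p ^ 2) := by
        gcongr 2 * (p ^ 2 * ?_) / m ^ 4 * exp ?_
        linarith
    _ = _ := by rw [radialMajorant, exp_add]; ring

lemma intervalIntegral_F_nonneg (hm : m ≠ 0) (hp : 0 ≤ p) (hq : 0 ≤ q) :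
    0 ≤ ∫ c in (-1 : ℝ)..1, F m q p c :=
  intervalIntegral.integral_nonneg (by norm_num) fun _ hc => F_nonneg hm hp hq hc.1

lemma intervalIntegral_F_le (hm : 0 < m) (hp : 0 ≤ p) (hq : 0 ≤ q) :
    ∫ c in (-1 : ℝ)..1, F m q p c ≤
      4 * exp (11 / 4 * q ^ 2 + 59 * m ^ 2) / m ^ 4 * radialMajorant m p := by
  have hnorm := intervalIntegral.norm_integral_le_of_norm_le_const (a := -1) (b := 1)
    (f := F m q p) (C := 2 * exp (11 / 4 * q ^ 2 + 59 * m ^ 2) / m ^ 4 * radialMajorant m p)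
    fun c hc => by
      rw [uIoc_of_le (by norm_num)] at hc
      rw [Real.norm_of_nonneg (F_nonneg hm.ne' hp hq hc.1.le)]
      exact F_le hm hp hq ⟨hc.1.le, hc.2⟩
  norm_num at hnorm
  calc _ ≤ |∫ c in (-1 : ℝ)..1, F m q p c| := le_abs_self _
    _ ≤ _ := hnorm
    _ = _ := by ring

lemma integral_F_le (hm : 0 < m) (hq : 0 ≤ q) :
    ∫ p in Ioi 0, ∫ c in (-1 : ℝ)..1, F m q p c ≤
      4 * exp (11 / 4 * q ^ 2 + 59 * m ^ 2) / m ^ 4 * ∫ p in Ioi 0, radialMajorant m p := by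
  rw [← integral_const_mul]
  refine integral_mono_of_nonneg ?_ ((integrableOn_radialMajorant m).const_mul _) ?_
  · filter_upwards [ae_restrict_mem measurableSet_Ioi] with p hp
    exact intervalIntegral_F_nonneg hm.ne' (le_of_lt hp) hq
  · filter_upwards [ae_restrict_mem measurableSet_Ioi] with p hp
    exact intervalIntegral_F_le hm (le_of_lt hp) hq

lemma δE_nonneg (hm : 0 < m) (hq : 0 ≤ q) : 0 ≤ δE m q :=
  mul_nonneg (div_nonneg (exp_pos _).le (mul_nonneg (by positivity) (ω_nonneg m q)))
    (setIntegral_nonneg measurableSet_Ioi fun _ hp =>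
      intervalIntegral_F_nonneg hm.ne' (le_of_lt hp) hq)

lemma δE_le (hm : 0 < m) (hq : 0 ≤ q) :
    δE m q ≤ exp (59 * m ^ 2) * (∫ p in Ioi 0, radialMajorant m p) / (4 * (2 * π) ^ 5 * m ^ 5) *
      exp (-q ^ 2 / 2) := by
  have hI : 0 ≤ ∫ p in Ioi 0, radialMajorant m p :=
    setIntegral_nonneg measurableSet_Ioi fun _ hp => radialMajorant_nonneg hm.le (le_of_lt hp)
  have hprefactor : exp (-(10 / 3) * q ^ 2 - 2 * m) / (16 * (2 * π) ^ 5 * ω m q) ≤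
      exp (-(10 / 3) * q ^ 2) / (16 * (2 * π) ^ 5 * m) :=
    div_le_div₀ (exp_pos _).le (exp_le_exp.2 (by linarith)) (by positivity)
      (mul_le_mul_of_nonneg_left (mass_le_ω m q) (by positivity))
  calc δE m q ≤ exp (-(10 / 3) * q ^ 2) / (16 * (2 * π) ^ 5 * m) *
        (4 * exp (11 / 4 * q ^ 2 + 59 * m ^ 2) / m ^ 4 * ∫ p in Ioi 0, radialMajorant m p) :=
        mul_le_mul hprefactor (integral_F_le hm hq)
          (setIntegral_nonneg measurableSet_Ioi fun _ hp =>
            intervalIntegral_F_nonneg hm.ne' (le_of_lt hp) hq) (by positivity)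
    _ = exp (59 * m ^ 2) * (∫ p in Ioi 0, radialMajorant m p) / (4 * (2 * π) ^ 5 * m ^ 5) *
          exp (-(7 / 12) * q ^ 2) := by
        rw [show -(7 / 12) * q ^ 2 = -(10 / 3) * q ^ 2 + 11 / 4 * q ^ 2 by ring]
        simp only [exp_add]
        field_simp
        ring
    _ ≤ _ := by gcongr; nlinarith [sq_nonneg q]

end Estimates

theorem stmt5 (m : ℝ) (hm : 0 < m) :
    ∃ C : ℝ, 0 < C ∧ (∀ q : ℝ, 0 ≤ q → δE m q ≤ C * Real.exp (-q ^ 2 / 2)) ∧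
      (∃ M : ℝ, ∀ q ∈ Set.Ici (0 : ℝ), |δE m q| ≤ M) ∧
      Filter.Tendsto (δE m) Filter.atTop (nhds 0) := by
  set K := exp (59 * m ^ 2) * (∫ p in Ioi 0, radialMajorant m p) / (4 * (2 * π) ^ 5 * m ^ 5)
  have hC : 0 < max K 1 := lt_max_of_lt_right one_pos
  have hbound (q : ℝ) (hq : 0 ≤ q) : δE m q ≤ max K 1 * exp (-q ^ 2 / 2) :=
    (δE_le hm hq).trans (mul_le_mul_of_nonneg_right (le_max_left K 1) (exp_pos _).le)
  refine ⟨max K 1, hC, hbound, ⟨max K 1, fun q hq => ?_⟩, ?_⟩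
  · rw [abs_of_nonneg (δE_nonneg hm hq)]
    refine (hbound q hq).trans (mul_le_of_le_one_right hC.le (exp_le_one_iff.2 ?_))
    nlinarith [sq_nonneg q]
  · have hgauss : Tendsto (fun q : ℝ => max K 1 * exp (-q ^ 2 / 2)) atTop (𝓝 0) := by
      have hsq : Tendsto (fun q : ℝ => q ^ 2 / 2) atTop atTop :=
        (tendsto_pow_atTop two_ne_zero).atTop_div_const two_pos
      simpa [neg_div] using (tendsto_exp_neg_atTop_nhds_zero.comp hsq).const_mul (max K 1)
    exact squeeze_zero' ((eventually_ge_atTop 0).mono fun q hq => δE_nonneg hm hq)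
      ((eventually_ge_atTop 0).mono hbound) hgauss
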